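/- Jump-LQR: the Riccati feedback with jump reset attains the lower bound: Under the hypotheses of the jump-LQR lower bound (continuous Aᵃ, Bᵃ, Aᵖ, Bᵖ, symmetric positive definite continuous Q, R, jump matrix H, Riccati solutions Pᵖ on [τ,T] with Pᵖ(T) = P_T and Pᵃ on [t₀,τ] with Pᵃ(τ) = (I + H)ᵀ Pᵖ(τ)(I + H)), define P(t) = Pᵃ(t) for t ∈ [t₀,τ) and P(t) = Pᵖ(t) for t ∈ [τ,T], and let z be the solution of the closed-loop jump system ż = (Aᵃ − Bᵃ R⁻¹ (Bᵃ)ᵀ P) z on [t₀,τ] with z(t₀) = z₀, z(τ⁺) = (I + H) z(τ⁻), and ż = (Aᵖ − Bᵖ R⁻¹ (Bᵖ)ᵀ P) z on [τ,T], with control v(t) = −R(t)⁻¹ B(t)ᵀ P(t) z(t) (with B = Bᵃ before τ and B = Bᵖ after τ). Then ½ ∫_{t₀}^{T} ( z(s)ᵀ Q(s) z(s) + v(s)ᵀ R(s) v(s) ) ds + ½ z(T)ᵀ P_T z(T) = ½ z₀ᵀ Pᵃ(t₀) z₀. -/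

import Mathlib

/-!
Along the closed loop the value `V(t) = z(t)ᵀ P(t) z(t)` satisfies `V' = -(zᵀQz + vᵀRv)`: this is
the Riccati equation read along the trajectory, once `v = -R⁻¹BᵀPz` is substituted. Hence on each
interval the running cost is the drop of `V`; as the cost is nonnegative, `-V` is monotone and its
derivative is automatically integrable. The reset `Pᵃ(τ) = (I + H)ᵀ Pᵖ(τ) (I + H)` together with
`z⁺ = (I + H) z⁻` makes `V` continuous across `τ`, and the two drops telescope to
`V(t₀) - z(T)ᵀ P_T z(T)`.
-/

open Set Matrix

section Algebra

variable {ι κ α : Type*} [Fintype ι] [Fintype κ] [CommRing α]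

theorem mulVec_dotProduct_eq_dotProduct_transpose_mulVec (M : Matrix ι κ α) (x : κ → α)
    (y : ι → α) : M *ᵥ x ⬝ᵥ y = x ⬝ᵥ Mᵀ *ᵥ y := by
  rw [← vecMul_transpose, dotProduct_mulVec]

theorem mulVec_dotProduct_mulVec_mulVec (M P : Matrix ι ι α) (x : ι → α) :
    M *ᵥ x ⬝ᵥ P *ᵥ (M *ᵥ x) = x ⬝ᵥ (Mᵀ * P * M) *ᵥ x := by
  rw [mulVec_dotProduct_eq_dotProduct_transpose_mulVec, mulVec_mulVec, mulVec_mulVec,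
    Matrix.mul_assoc]

variable [DecidableEq κ]

theorem riccati_closedLoop_eq (A Q P P' : Matrix ι ι α) (B : Matrix ι κ α) (R : Matrix κ κ α)
    (hP : Pᵀ = P) (hR : Rᵀ = R)
    (hRic : -P' = Aᵀ * P + P * A - P * B * R⁻¹ * Bᵀ * P + Q) :
    (A - B * R⁻¹ * Bᵀ * P)ᵀ * P + P' + P * (A - B * R⁻¹ * Bᵀ * P) =
      -(Q + P * B * R⁻¹ * Bᵀ * P) := by
  rw [neg_eq_iff_eq_neg.mp hRic]
  simp only [transpose_sub, transpose_mul, transpose_transpose, transpose_nonsing_inv, hP, hR,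
    Matrix.sub_mul, Matrix.mul_sub, Matrix.mul_assoc]
  abel

theorem feedback_cost_eq (Q P : Matrix ι ι α) (B : Matrix ι κ α) (R : Matrix κ κ α)
    (hP : Pᵀ = P) (hR : Rᵀ = R) (hRdet : IsUnit R.det) (z : ι → α) :
    z ⬝ᵥ Q *ᵥ z + -(R⁻¹ *ᵥ (Bᵀ *ᵥ (P *ᵥ z))) ⬝ᵥ R *ᵥ -(R⁻¹ *ᵥ (Bᵀ *ᵥ (P *ᵥ z))) =
      z ⬝ᵥ (Q + P * B * R⁻¹ * Bᵀ * P) *ᵥ z := by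
  have hgain : (R⁻¹ * Bᵀ * P)ᵀ * (R * (R⁻¹ * Bᵀ * P)) = P * B * R⁻¹ * Bᵀ * P := by
    simp only [transpose_mul, transpose_transpose, transpose_nonsing_inv, hR, hP,
      Matrix.mul_assoc, nonsing_inv_mul_cancel_left _ _ hRdet]
  rw [neg_dotProduct, mulVec_neg, dotProduct_neg, neg_neg, mulVec_mulVec, mulVec_mulVec,
    mulVec_mulVec, mulVec_dotProduct_eq_dotProduct_transpose_mulVec, mulVec_mulVec, hgain,
    add_mulVec, dotProduct_add]

theorem closedLoop_value_deriv_eq_neg_cost (A Q P P' : Matrix ι ι α) (B : Matrix ι κ α)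
    (R : Matrix κ κ α) (hP : Pᵀ = P) (hR : Rᵀ = R) (hRdet : IsUnit R.det)
    (hRic : -P' = Aᵀ * P + P * A - P * B * R⁻¹ * Bᵀ * P + Q) (z : ι → α) :
    (A - B * R⁻¹ * Bᵀ * P) *ᵥ z ⬝ᵥ P *ᵥ z + z ⬝ᵥ (P' *ᵥ z + P *ᵥ ((A - B * R⁻¹ * Bᵀ * P) *ᵥ z)) =
      -(z ⬝ᵥ Q *ᵥ z + -(R⁻¹ *ᵥ (Bᵀ *ᵥ (P *ᵥ z))) ⬝ᵥ R *ᵥ -(R⁻¹ *ᵥ (Bᵀ *ᵥ (P *ᵥ z)))) := by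
  rw [feedback_cost_eq Q P B R hP hR hRdet, ← dotProduct_neg, ← neg_mulVec,
    ← riccati_closedLoop_eq A Q P P' B R hP hR hRic,
    mulVec_dotProduct_eq_dotProduct_transpose_mulVec, mulVec_mulVec, mulVec_mulVec,
    ← dotProduct_add, ← add_mulVec, ← add_mulVec, add_assoc]

end Algebra

section Calculus

variable {ι κ : Type*} [Fintype ι] {t : ℝ}

theorem HasDerivAt.dotProduct {x y : ℝ → ι → ℝ} {x' y' : ι → ℝ} (hx : HasDerivAt x x' t)
    (hy : HasDerivAt y y' t) :
    HasDerivAt (fun s => x s ⬝ᵥ y s) (x' ⬝ᵥ y t + x t ⬝ᵥ y') t := by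
  have h := HasDerivAt.fun_sum (u := Finset.univ) fun i _ =>
    (hasDerivAt_pi.1 hx i).fun_mul (hasDerivAt_pi.1 hy i)
  rwa [Finset.sum_add_distrib] at h

theorem HasDerivAt.mulVec {M : ℝ → Matrix κ ι ℝ} {M' : Matrix κ ι ℝ} {z : ℝ → ι → ℝ}
    {z' : ι → ℝ} (hM : ∀ i j, HasDerivAt (fun s => M s i j) (M' i j) t)
    (hz : HasDerivAt z z' t) :
    HasDerivAt (fun s => M s *ᵥ z s) (M' *ᵥ z t + M t *ᵥ z') t :=
  hasDerivAt_pi.2 fun i => (hasDerivAt_pi.2 (hM i)).dotProduct hz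

end Calculus

section Interval

variable {ι κ : Type*} [Fintype ι] [Fintype κ] [DecidableEq κ]

theorem integral_lqr_cost_eq_value_sub {a b : ℝ} (hab : a ≤ b)
    (A Q P P' : ℝ → Matrix ι ι ℝ) (B : ℝ → Matrix ι κ ℝ) (R : ℝ → Matrix κ κ ℝ)
    (hQ : ∀ t ∈ Icc a b, (Q t).PosSemidef) (hR : ∀ t ∈ Icc a b, (R t).PosDef)
    (hP : ∀ t ∈ Icc a b, (P t)ᵀ = P t)
    (hP' : ∀ t ∈ Icc a b, ∀ i j, HasDerivAt (fun s => P s i j) (P' t i j) t)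
    (hRic : ∀ t ∈ Icc a b,
      -P' t = (A t)ᵀ * P t + P t * A t - P t * B t * (R t)⁻¹ * (B t)ᵀ * P t + Q t)
    (z : ℝ → ι → ℝ) (v : ℝ → κ → ℝ)
    (hz : ∀ t ∈ Icc a b, HasDerivAt z ((A t - B t * (R t)⁻¹ * (B t)ᵀ * P t) *ᵥ z t) t)
    (hv : ∀ t ∈ Ioo a b, v t = -((R t)⁻¹ *ᵥ ((B t)ᵀ *ᵥ (P t *ᵥ z t)))) :
    ∫ s in a..b, (z s ⬝ᵥ Q s *ᵥ z s + v s ⬝ᵥ R s *ᵥ v s) =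
      z a ⬝ᵥ P a *ᵥ z a - z b ⬝ᵥ P b *ᵥ z b := by
  set u : ℝ → κ → ℝ := fun t => -((R t)⁻¹ *ᵥ ((B t)ᵀ *ᵥ (P t *ᵥ z t)))
  set cost : ℝ → ℝ := fun t => z t ⬝ᵥ Q t *ᵥ z t + u t ⬝ᵥ R t *ᵥ u t
  have hderiv : ∀ t ∈ Icc a b, HasDerivAt (fun s => -(z s ⬝ᵥ P s *ᵥ z s)) (cost t) t := by
    intro t ht
    have hRsymm : (R t)ᵀ = R t := (isHermitian_iff_isSymm.1 (hR t ht).isHermitian).eq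
    refine ((hz t ht).dotProduct (HasDerivAt.mulVec (hP' t ht) (hz t ht))).neg.congr_deriv ?_
    rw [closedLoop_value_deriv_eq_neg_cost _ _ _ _ _ _ (hP t ht) hRsymm
      (hR t ht).det_pos.ne'.isUnit (hRic t ht), neg_neg]
  have hcost : ∀ t ∈ Icc a b, 0 ≤ cost t := fun t ht =>
    add_nonneg ((hQ t ht).dotProduct_mulVec_nonneg (z t))
      ((hR t ht).posSemidef.dotProduct_mulVec_nonneg (u t))
  rw [← uIcc_of_le hab] at hderiv hcost
  have hint : IntervalIntegrable cost MeasureTheory.volume a b :=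
    intervalIntegral.intervalIntegrable_deriv_of_nonneg
      (fun t ht => (hderiv t ht).continuousAt.continuousWithinAt)
      (fun t ht => hderiv t (Ioo_subset_Icc_self ht))
      (fun t ht => hcost t (Ioo_subset_Icc_self ht))
  calc ∫ s in a..b, (z s ⬝ᵥ Q s *ᵥ z s + v s ⬝ᵥ R s *ᵥ v s)
      = ∫ s in a..b, cost s := intervalIntegral.integral_congr_Ioo_of_le hab fun t ht => by
        simp only [cost, u, hv t ht]
    _ = -(z b ⬝ᵥ P b *ᵥ z b) - -(z a ⬝ᵥ P a *ᵥ z a) :=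
        intervalIntegral.integral_eq_sub_of_hasDerivAt hderiv hint
    _ = z a ⬝ᵥ P a *ᵥ z a - z b ⬝ᵥ P b *ᵥ z b := by ring

end Interval

theorem jump_lqr_feedback_attains_bound_general
    (n m : ℕ) (t₀ τ tf : ℝ) (h0τ : t₀ < τ) (hτf : τ < tf)
    (Aa Ap Q : ℝ → Matrix (Fin n) (Fin n) ℝ)
    (Ba Bp : ℝ → Matrix (Fin n) (Fin m) ℝ)
    (R : ℝ → Matrix (Fin m) (Fin m) ℝ)
    (H P_T : Matrix (Fin n) (Fin n) ℝ)
    (hQ : ∀ t ∈ Icc t₀ tf, (Q t).PosDef)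
    (hR : ∀ t ∈ Icc t₀ tf, (R t).PosDef)
    -- Riccati solution on the post-event interval [τ, T]
    (Pp Pp' : ℝ → Matrix (Fin n) (Fin n) ℝ)
    (hPpsym : ∀ t ∈ Icc τ tf, (Pp t)ᵀ = Pp t)
    (hPp' : ∀ t ∈ Icc τ tf, ∀ i j, HasDerivAt (fun s => Pp s i j) (Pp' t i j) t)
    (hRicp : ∀ t ∈ Icc τ tf,
      -Pp' t = (Ap t)ᵀ * Pp t + Pp t * Ap t
        - Pp t * Bp t * (R t)⁻¹ * (Bp t)ᵀ * Pp t + Q t)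
    (hPpT : Pp tf = P_T)
    -- Riccati solution on the ante-event interval [t₀, τ], with jump reset
    (Pa Pa' : ℝ → Matrix (Fin n) (Fin n) ℝ)
    (hPasym : ∀ t ∈ Icc t₀ τ, (Pa t)ᵀ = Pa t)
    (hPa' : ∀ t ∈ Icc t₀ τ, ∀ i j, HasDerivAt (fun s => Pa s i j) (Pa' t i j) t)
    (hRica : ∀ t ∈ Icc t₀ τ,
      -Pa' t = (Aa t)ᵀ * Pa t + Pa t * Aa t
        - Pa t * Ba t * (R t)⁻¹ * (Ba t)ᵀ * Pa t + Q t)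
    (hPaτ : Pa τ = (1 + H)ᵀ * Pp τ * (1 + H))
    -- the closed-loop jumping trajectory and the feedback control
    (z₀ : Fin n → ℝ) (za zp : ℝ → Fin n → ℝ) (v : ℝ → Fin m → ℝ)
    (hz0 : za t₀ = z₀)
    (hza : ∀ t ∈ Icc t₀ τ,
      HasDerivAt za
        ((Aa t - Ba t * (R t)⁻¹ * (Ba t)ᵀ * Pa t).mulVec (za t)) t)
    (hjump : zp τ = (1 + H).mulVec (za τ))
    (hzp : ∀ t ∈ Icc τ tf,
      HasDerivAt zp
        ((Ap t - Bp t * (R t)⁻¹ * (Bp t)ᵀ * Pp t).mulVec (zp t)) t)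
    (hva : ∀ t ∈ Ico t₀ τ,
      v t = -((R t)⁻¹.mulVec ((Ba t)ᵀ.mulVec ((Pa t).mulVec (za t)))))
    (hvp : ∀ t ∈ Icc τ tf,
      v t = -((R t)⁻¹.mulVec ((Bp t)ᵀ.mulVec ((Pp t).mulVec (zp t))))) :
    (1 / 2) *
        ((∫ s in t₀..τ, (za s ⬝ᵥ (Q s).mulVec (za s) + v s ⬝ᵥ (R s).mulVec (v s)))
          + ∫ s in τ..tf, (zp s ⬝ᵥ (Q s).mulVec (zp s) + v s ⬝ᵥ (R s).mulVec (v s)))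
        + (1 / 2) * (zp tf ⬝ᵥ P_T.mulVec (zp tf))
      = (1 / 2) * (z₀ ⬝ᵥ (Pa t₀).mulVec z₀) := by
  have ante_sub : Icc t₀ τ ⊆ Icc t₀ tf := Icc_subset_Icc_right hτf.le
  have post_sub : Icc τ tf ⊆ Icc t₀ tf := Icc_subset_Icc_left h0τ.le
  have cost_ante := integral_lqr_cost_eq_value_sub h0τ.le Aa Q Pa Pa' Ba R
    (fun t ht => (hQ t (ante_sub ht)).posSemidef) (fun t ht => hR t (ante_sub ht))
    hPasym hPa' hRica za v hza fun t ht => hva t (Ioo_subset_Ico_self ht)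
  have cost_post := integral_lqr_cost_eq_value_sub hτf.le Ap Q Pp Pp' Bp R
    (fun t ht => (hQ t (post_sub ht)).posSemidef) (fun t ht => hR t (post_sub ht))
    hPpsym hPp' hRicp zp v hzp fun t ht => hvp t (Ioo_subset_Icc_self ht)
  have value_reset : za τ ⬝ᵥ Pa τ *ᵥ za τ = zp τ ⬝ᵥ Pp τ *ᵥ zp τ := by
    rw [hPaτ, hjump, mulVec_dotProduct_mulVec_mulVec]
  rw [cost_ante, cost_post, value_reset, hz0, hPpT]
  ring

/-- Jump-LQR: the Riccati feedback with jump reset attains the lower bound.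
With `P = Pᵃ` on `[t₀,τ)` and `P = Pᵖ` on `[τ,T]`, the closed-loop jumping
trajectory `ż = (A − B R⁻¹ Bᵀ P) z` (ante dynamics before `τ`, reset
`z⁺ = (I + H) z⁻` at `τ`, post dynamics after `τ`) with feedback control
`v = −R⁻¹BᵀPz` achieves cost exactly `½ z₀ᵀ Pᵃ(t₀) z₀`. -/
theorem jump_lqr_feedback_attains_bound
    (n m : ℕ) (t₀ τ tf : ℝ) (h0τ : t₀ < τ) (hτf : τ < tf)
    (Aa Ap Q : ℝ → Matrix (Fin n) (Fin n) ℝ)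
    (Ba Bp : ℝ → Matrix (Fin n) (Fin m) ℝ)
    (R : ℝ → Matrix (Fin m) (Fin m) ℝ)
    (H P_T : Matrix (Fin n) (Fin n) ℝ) (hPT : P_Tᵀ = P_T)
    (hAa : ∀ i j, ContinuousOn (fun t => Aa t i j) (Icc t₀ tf))
    (hAp : ∀ i j, ContinuousOn (fun t => Ap t i j) (Icc t₀ tf))
    (hBa : ∀ i j, ContinuousOn (fun t => Ba t i j) (Icc t₀ tf))
    (hBp : ∀ i j, ContinuousOn (fun t => Bp t i j) (Icc t₀ tf))
    (hQc : ∀ i j, ContinuousOn (fun t => Q t i j) (Icc t₀ tf))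
    (hRc : ∀ i j, ContinuousOn (fun t => R t i j) (Icc t₀ tf))
    (hQ : ∀ t ∈ Icc t₀ tf, (Q t).PosDef)
    (hR : ∀ t ∈ Icc t₀ tf, (R t).PosDef)
    -- Riccati solution on the post-event interval [τ, T]
    (Pp Pp' : ℝ → Matrix (Fin n) (Fin n) ℝ)
    (hPpsym : ∀ t ∈ Icc τ tf, (Pp t)ᵀ = Pp t)
    (hPp' : ∀ t ∈ Icc τ tf, ∀ i j, HasDerivAt (fun s => Pp s i j) (Pp' t i j) t)
    (hRicp : ∀ t ∈ Icc τ tf,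
      -Pp' t = (Ap t)ᵀ * Pp t + Pp t * Ap t
        - Pp t * Bp t * (R t)⁻¹ * (Bp t)ᵀ * Pp t + Q t)
    (hPpT : Pp tf = P_T)
    -- Riccati solution on the ante-event interval [t₀, τ], with jump reset
    (Pa Pa' : ℝ → Matrix (Fin n) (Fin n) ℝ)
    (hPasym : ∀ t ∈ Icc t₀ τ, (Pa t)ᵀ = Pa t)
    (hPa' : ∀ t ∈ Icc t₀ τ, ∀ i j, HasDerivAt (fun s => Pa s i j) (Pa' t i j) t)
    (hRica : ∀ t ∈ Icc t₀ τ,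
      -Pa' t = (Aa t)ᵀ * Pa t + Pa t * Aa t
        - Pa t * Ba t * (R t)⁻¹ * (Ba t)ᵀ * Pa t + Q t)
    (hPaτ : Pa τ = (1 + H)ᵀ * Pp τ * (1 + H))
    -- the closed-loop jumping trajectory and the feedback control
    (z₀ : Fin n → ℝ) (za zp : ℝ → Fin n → ℝ) (v : ℝ → Fin m → ℝ)
    (hz0 : za t₀ = z₀)
    (hza : ∀ t ∈ Icc t₀ τ,
      HasDerivAt za
        ((Aa t - Ba t * (R t)⁻¹ * (Ba t)ᵀ * Pa t).mulVec (za t)) t)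
    (hjump : zp τ = (1 + H).mulVec (za τ))
    (hzp : ∀ t ∈ Icc τ tf,
      HasDerivAt zp
        ((Ap t - Bp t * (R t)⁻¹ * (Bp t)ᵀ * Pp t).mulVec (zp t)) t)
    (hva : ∀ t ∈ Ico t₀ τ,
      v t = -((R t)⁻¹.mulVec ((Ba t)ᵀ.mulVec ((Pa t).mulVec (za t)))))
    (hvp : ∀ t ∈ Icc τ tf,
      v t = -((R t)⁻¹.mulVec ((Bp t)ᵀ.mulVec ((Pp t).mulVec (zp t))))) :
    (1 / 2) *
        ((∫ s in t₀..τ, (za s ⬝ᵥ (Q s).mulVec (za s) + v s ⬝ᵥ (R s).mulVec (v s)))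
          + ∫ s in τ..tf, (zp s ⬝ᵥ (Q s).mulVec (zp s) + v s ⬝ᵥ (R s).mulVec (v s)))
        + (1 / 2) * (zp tf ⬝ᵥ P_T.mulVec (zp tf))
      = (1 / 2) * (z₀ ⬝ᵥ (Pa t₀).mulVec z₀) :=
  jump_lqr_feedback_attains_bound_general n m t₀ τ tf h0τ hτf Aa Ap Q Ba Bp R H P_T hQ hR Pp Pp'
    hPpsym hPp' hRicp hPpT Pa Pa' hPasym hPa' hRica hPaτ z₀ za zp v hz0 hza hjump hzp hva hvp
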